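/- arXiv:1206.4022 — 9 statements merged into one kernel-verified Lean document; each statement's English description precedes it below -/
import Mathlib

section
/- Let T be a bounded operator on a Hilbert space H with ‖I - T‖ ≤ 1. Then T is not invertible if and only if ‖I - (1/2)T‖ = 1. -/
/-!
Since `1 - T/2 = (1 + (1 - T))/2`, always `‖1 - T/2‖ ≤ 1`, and if this is strict then `T/2`,
hence `T`, is invertible by the Neumann series. Conversely, if `T` is invertible then
`‖T x‖ ≥ ‖x‖ / ‖T⁻¹‖`, while the parallelogram law for `x` and `(1 - T) x`, together with
`‖(1 - T) x‖ ≤ ‖x‖`, gives `‖(1 - T/2) x‖² + ‖T x‖²/4 ≤ ‖x‖²`; hence `‖1 - T/2‖ < 1`.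
-/

theorem isUnit_of_norm_one_sub_smul_lt_one {𝕜 A : Type*} [NontriviallyNormedField 𝕜]
    [NormedRing A] [NormedAlgebra 𝕜 A] [CompleteSpace A] {c : 𝕜} (hc : c ≠ 0) {a : A}
    (h : ‖1 - c • a‖ < 1) : IsUnit a := by
  have hca : IsUnit (c • a) := by simpa using (Units.oneSub _ h).isUnit
  rwa [← Units.smul_mk0 hc, isUnit_smul_iff] at hca

theorem norm_one_sub_half_smul_le {𝕜 A : Type*} [RCLike 𝕜] [NormedRing A] [NormedAlgebra 𝕜 A]
    (h1 : ‖(1 : A)‖ ≤ 1) {a : A} (ha : ‖1 - a‖ ≤ 1) : ‖1 - (1 / 2 : 𝕜) • a‖ ≤ 1 := by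
  have hmid : 1 - (1 / 2 : 𝕜) • a = (1 / 2 : 𝕜) • (1 + (1 - a)) := by module
  have hhalf : ‖(1 / 2 : 𝕜)‖ = 1 / 2 := by norm_num
  calc ‖1 - (1 / 2 : 𝕜) • a‖ ≤ 1 / 2 * (‖(1 : A)‖ + ‖1 - a‖) := by
        rw [hmid, norm_smul, hhalf]; gcongr; exact norm_add_le _ _
    _ ≤ 1 := by linarith

theorem ContinuousLinearMap.norm_le_norm_inv_mul_norm_apply {𝕜 E : Type*}
    [NontriviallyNormedField 𝕜] [NormedAddCommGroup E] [NormedSpace 𝕜 E]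
    (U : (E →L[𝕜] E)ˣ) (x : E) : ‖x‖ ≤ ‖(↑U⁻¹ : E →L[𝕜] E)‖ * ‖(U : E →L[𝕜] E) x‖ := by
  have hx : (↑U⁻¹ : E →L[𝕜] E) ((U : E →L[𝕜] E) x) = x := by
    rw [← mul_apply_eq_comp, U.inv_mul, one_apply_eq_self]
  simpa only [hx] using (↑U⁻¹ : E →L[𝕜] E).le_opNorm ((U : E →L[𝕜] E) x)

section InnerProductSpace

variable {𝕜 E : Type*} [RCLike 𝕜] [NormedAddCommGroup E] [InnerProductSpace 𝕜 E]

theorem norm_sub_half_smul_sq_add_le {x y : E} (h : ‖x - y‖ ≤ ‖x‖) :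
    ‖x - (1 / 2 : 𝕜) • y‖ ^ 2 + ‖y‖ ^ 2 / 4 ≤ ‖x‖ ^ 2 := by
  have hmid : x - (1 / 2 : 𝕜) • y = (1 / 2 : 𝕜) • (x + (x - y)) := by module
  have hpar := parallelogram_law_with_norm 𝕜 x (x - y)
  rw [sub_sub_cancel] at hpar
  have hhalf : ‖(1 / 2 : 𝕜)‖ = 1 / 2 := by norm_num
  rw [hmid, norm_smul, mul_pow, hhalf]
  nlinarith [norm_nonneg (x - y)]

theorem ContinuousLinearMap.norm_one_sub_half_smul_lt_one {T : E →L[𝕜] E} (hT : ‖1 - T‖ ≤ 1)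
    {C : ℝ} (hC : ∀ x, ‖x‖ ≤ C * ‖T x‖) : ‖1 - (1 / 2 : 𝕜) • T‖ < 1 := by
  -- Enlarging `C` to `D ≥ 1` keeps the radicand `1 - (2 * D)⁻¹ ^ 2` below nonnegative.
  set D := max C 1
  have hTx : ∀ x, ‖x‖ ≤ D * ‖T x‖ := fun x =>
    (hC x).trans (mul_le_mul_of_nonneg_right (le_max_left C 1) (norm_nonneg _))
  have hε : (2 * D)⁻¹ ^ 2 ≤ 1 := pow_le_one₀ (by positivity) (inv_le_one_of_one_le₀ (by linarith [le_max_right C 1]))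
  have hbound : ∀ x, ‖(1 - (1 / 2 : 𝕜) • T) x‖ ≤ √(1 - (2 * D)⁻¹ ^ 2) * ‖x‖ := fun x => by
    have hlow : (2 * D)⁻¹ * ‖x‖ ≤ ‖T x‖ / 2 := by
      rw [mul_inv, mul_assoc, inv_mul_le_iff₀ two_pos, mul_div_cancel₀ _ two_ne_zero,
        inv_mul_le_iff₀ (by positivity)]
      exact hTx x
    have hmid := norm_sub_half_smul_sq_add_le (𝕜 := 𝕜) (x := x) (y := T x) <| by
      simpa using (1 - T).le_of_opNorm_le hT x
    rw [← Real.sqrt_sq (norm_nonneg x), ← Real.sqrt_mul (by linarith),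
      Real.le_sqrt (norm_nonneg _) (by nlinarith)]
    simp only [sub_apply, one_apply_eq_self, smul_apply]
    nlinarith [pow_le_pow_left₀ (by positivity) hlow 2]
  calc ‖1 - (1 / 2 : 𝕜) • T‖ ≤ √(1 - (2 * D)⁻¹ ^ 2) := opNorm_le_bound _ (Real.sqrt_nonneg _) hbound
    _ < 1 := by
      rw [Real.sqrt_lt' one_pos, one_pow, sub_lt_self_iff]
      positivity

end InnerProductSpace

/-- Lemma 1.1 (Blecher–Read): Let `T` be a bounded operator on a complex Hilbert
space `H` with `‖I - T‖ ≤ 1`. Then `T` is not invertible in `B(H)` if and only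
if `‖I - (1/2)T‖ = 1`. -/
theorem stmt0 {H : Type*} [NormedAddCommGroup H] [InnerProductSpace ℂ H]
    [CompleteSpace H] (T : H →L[ℂ] H) (hT : ‖1 - T‖ ≤ 1) :
    ¬ IsUnit T ↔ ‖1 - (1 / 2 : ℂ) • T‖ = 1 := by
  constructor
  · intro hnu
    refine le_antisymm (norm_one_sub_half_smul_le ContinuousLinearMap.norm_id_le hT) ?_
    exact not_lt.1 fun hlt => hnu (isUnit_of_norm_one_sub_smul_lt_one (by norm_num) hlt)
  · rintro h ⟨U, rfl⟩
    exact (ContinuousLinearMap.norm_one_sub_half_smul_lt_one hT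
      (ContinuousLinearMap.norm_le_norm_inv_mul_norm_apply U)).ne h
end

section
/- Let T be a bounded operator on a Hilbert space with ‖I - T‖ ≤ 1. Then T is invertible in B(H) if and only if T is invertible in the closed unital subalgebra generated by I and T. -/
open Filter Topology

section

variable {𝕜 A : Type*} [RCLike 𝕜] [NormedRing A] [NormedAlgebra 𝕜 A] [CompleteSpace A]

/-- The elements `1 - t • (1 - a)`, `0 < t < 1`, are invertible in `S` by a Neumann series and
tend to `a` as `t → 1`; since `a` is invertible in `A` and inversion is continuous there,
`a⁻¹` is a limit of elements of the closed set `S`. -/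
theorem Subalgebra.isUnit_of_isUnit_val_of_norm_one_sub_le (S : Subalgebra 𝕜 A)
    [hS : IsClosed (S : Set A)] {a : S} (ha : IsUnit (a : A)) (h : ‖1 - (a : A)‖ ≤ 1) :
    IsUnit a := by
  have : CompleteSpace S := hS.completeSpace_coe
  let γ : ℝ → S := fun t ↦ 1 - (t : 𝕜) • (1 - a)
  have hγ : Tendsto γ (𝓝[<] 1) (𝓝 a) := by
    have : Continuous γ := by fun_prop
    simpa [γ] using (this.tendsto 1).mono_left nhdsWithin_le_nhds
  refine Subalgebra.isUnit_of_isUnit_val_of_eventually S ha hγ ?_ inferInstance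
  rw [eventually_map]
  filter_upwards [Ioo_mem_nhdsLT (zero_lt_one' ℝ)] with t ht
  have hsmall : ‖(t : 𝕜) • (1 - a)‖ < 1 := by
    rw [norm_smul, RCLike.norm_ofReal, abs_of_pos ht.1]
    exact (mul_le_of_le_one_right ht.1.le h).trans_lt ht.2
  exact (Units.oneSub _ hsmall).isUnit

end

/-- Let `T ∈ B(H)` with `‖I - T‖ ≤ 1`.  Then `T` is invertible in `B(H)` if and
only if `T` is invertible in the closed unital subalgebra of `B(H)` generated by
`I` and `T`. -/
theorem stmt1 {H : Type*} [NormedAddCommGroup H] [InnerProductSpace ℂ H]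
    [CompleteSpace H] (T : H →L[ℂ] H) (hT : ‖1 - T‖ ≤ 1) :
    IsUnit T ↔
      IsUnit (⟨T, (Algebra.adjoin ℂ ({T} : Set (H →L[ℂ] H))).le_topologicalClosure
        (Algebra.subset_adjoin rfl)⟩ :
        (Algebra.adjoin ℂ ({T} : Set (H →L[ℂ] H))).topologicalClosure) := by
  have := (Algebra.adjoin ℂ ({T} : Set (H →L[ℂ] H))).isClosed_topologicalClosure
  exact ⟨fun h ↦ Subalgebra.isUnit_of_isUnit_val_of_norm_one_sub_le _ h hT,
    fun h ↦ h.map (Subalgebra.val _)⟩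
end

section
/- Let x be a bounded operator on a Hilbert space with x + x* ≥ 0, and set y = x(I + x)⁻¹ (the inverse exists). Then ‖I - 2y‖ ≤ 1. -/
open ContinuousLinearMap
open scoped InnerProductSpace

/-!
The hypothesis says that the operator `T` is accretive: `0 ≤ re ⟪T k, k⟫`.
Then `re ⟪(1 + T) k, k⟫ ≥ ‖k‖²`, so `1 + T` is invertible by the Lax–Milgram argument, and
`‖k - T k‖ ≤ ‖k + T k‖` by expanding both squares. Since `1 - 2 T (1 + T)⁻¹ = (1 - T)(1 + T)⁻¹`,
substituting `k = (1 + T)⁻¹ h` gives `‖(1 - 2 T (1 + T)⁻¹) h‖ ≤ ‖h‖`.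
-/

theorem Ring.one_sub_two_mul_mul_inverse_one_add {R : Type*} [Ring R] {x : R}
    (hx : IsUnit (1 + x)) :
    1 - 2 * (x * Ring.inverse (1 + x)) = (1 - x) * Ring.inverse (1 + x) := by
  have hinv : (1 + x) * Ring.inverse (1 + x) = 1 := Ring.mul_inverse_cancel _ hx
  calc 1 - 2 * (x * Ring.inverse (1 + x))
      = (1 + x) * Ring.inverse (1 + x) - 2 * (x * Ring.inverse (1 + x)) := by rw [hinv]
    _ = (1 - x) * Ring.inverse (1 + x) := by noncomm_ring

theorem norm_sub_le_norm_add_of_re_inner_nonneg {𝕜 E : Type*} [RCLike 𝕜] [NormedAddCommGroup E]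
    [InnerProductSpace 𝕜 E] {x y : E} (h : 0 ≤ RCLike.re ⟪x, y⟫_𝕜) : ‖x - y‖ ≤ ‖x + y‖ := by
  refine (pow_le_pow_iff_left₀ (norm_nonneg _) (norm_nonneg _) two_ne_zero).mp ?_
  rw [norm_sub_sq (𝕜 := 𝕜), norm_add_sq (𝕜 := 𝕜)]
  linarith

namespace ContinuousLinearMap

theorem norm_mul_inverse_le_one {𝕜 E : Type*} [NontriviallyNormedField 𝕜] [NormedAddCommGroup E]
    [NormedSpace 𝕜 E] {S U : E →L[𝕜] E} (hU : IsUnit U) (h : ∀ k, ‖S k‖ ≤ ‖U k‖) :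
    ‖S * Ring.inverse U‖ ≤ 1 := by
  refine opNorm_le_bound _ zero_le_one fun v => ?_
  have hUv : U (Ring.inverse U v) = v := by
    rw [← mul_apply_eq_comp, Ring.mul_inverse_cancel _ hU, one_apply_eq_self]
  simpa [hUv] using h (Ring.inverse U v)

variable {𝕜 E : Type*} [RCLike 𝕜] [NormedAddCommGroup E] [InnerProductSpace 𝕜 E]

def IsAccretive (T : E →L[𝕜] E) : Prop :=
  ∀ k, 0 ≤ RCLike.re ⟪T k, k⟫_𝕜

theorem isAccretive_of_isPositive_add_adjoint [CompleteSpace E] {T : E →L[𝕜] E}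
    (hT : (T + adjoint T).IsPositive) : T.IsAccretive := fun k => by
  have h := hT.re_inner_nonneg_left k
  rw [add_apply, inner_add_left, map_add, adjoint_inner_left, inner_re_symm (𝕜 := 𝕜) k] at h
  linarith

namespace IsAccretive

variable {T : E →L[𝕜] E}

theorem isUnit_one_add [CompleteSpace E] (hT : T.IsAccretive) : IsUnit (1 + T) := by
  refine isUnit_of_forall_le_norm_inner_map (1 + T) one_pos fun k => ?_
  calc ‖k‖ ^ 2 * ((1 : NNReal) : ℝ)
      ≤ ‖k‖ ^ 2 + RCLike.re ⟪T k, k⟫_𝕜 := by simpa using hT k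
    _ = RCLike.re ⟪(1 + T) k, k⟫_𝕜 := by
      rw [add_apply, one_apply_eq_self, inner_add_left, map_add, inner_self_eq_norm_sq]
    _ ≤ ‖⟪(1 + T) k, k⟫_𝕜‖ := RCLike.re_le_norm _

theorem norm_one_sub_apply_le (hT : T.IsAccretive) (k : E) : ‖(1 - T) k‖ ≤ ‖(1 + T) k‖ :=
  norm_sub_le_norm_add_of_re_inner_nonneg (inner_re_symm (𝕜 := 𝕜) (T k) k ▸ hT k)

end IsAccretive

end ContinuousLinearMap

/-- If `x ∈ B(H)` has `x + x* ≥ 0`, then `I + x` is invertible, and with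
`y = x (I + x)⁻¹` (the Cayley transform trick) one has `‖I - 2y‖ ≤ 1`. -/
theorem stmt3 {H : Type*} [NormedAddCommGroup H] [InnerProductSpace ℂ H]
    [CompleteSpace H] (x : H →L[ℂ] H) (hx : (x + adjoint x).IsPositive) :
    IsUnit (1 + x) ∧ ‖1 - (2 : ℂ) • (x * Ring.inverse (1 + x))‖ ≤ 1 := by
  have hacc : x.IsAccretive := isAccretive_of_isPositive_add_adjoint hx
  have hunit : IsUnit (1 + x) := hacc.isUnit_one_add
  refine ⟨hunit, ?_⟩
  rw [two_smul, ← two_mul, Ring.one_sub_two_mul_mul_inverse_one_add hunit]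
  exact norm_mul_inverse_le_one hunit hacc.norm_one_sub_apply_le
end

section
/- Let x be a nonzero bounded operator on a Hilbert space with x + x* ≥ 0. Then ‖x(I + x)⁻¹‖ ≤ ‖x‖ / √(1 + ‖x‖²). -/
open ContinuousLinearMap

/-- If `x ∈ B(H)` is nonzero with `x + x* ≥ 0` (so that `I + x` is invertible),
then `‖x (I + x)⁻¹‖ ≤ ‖x‖ / √(1 + ‖x‖²)`. -/
theorem stmt4 {H : Type*} [NormedAddCommGroup H] [InnerProductSpace ℂ H]
    [CompleteSpace H] (x : H →L[ℂ] H) (hx : (x + adjoint x).IsPositive)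
    (hx0 : x ≠ 0) :
    ‖x * Ring.inverse (1 + x)‖ ≤ ‖x‖ / Real.sqrt (1 + ‖x‖ ^ 2) := by
  have hxpos : (0 : ℝ) < ‖x‖ := norm_pos_iff.mpr hx0
  have hs : (0 : ℝ) < Real.sqrt (1 + ‖x‖ ^ 2) := Real.sqrt_pos.mpr (by positivity)
  have hs2 : Real.sqrt (1 + ‖x‖ ^ 2) ^ 2 = 1 + ‖x‖ ^ 2 :=
    Real.sq_sqrt (by positivity)
  have hc : (0 : ℝ) ≤ ‖x‖ / Real.sqrt (1 + ‖x‖ ^ 2) := by positivity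
  by_cases h : IsUnit (1 + x)
  · -- key pointwise inequality
    have key : ∀ η : H, ‖x η‖ ^ 2 * (1 + ‖x‖ ^ 2) ≤ ‖x‖ ^ 2 * ‖(1 + x) η‖ ^ 2 := by
      intro η
      have hre : 0 ≤ RCLike.re ((@inner ℂ H _ η (x η))) := by
        have h2 := hx.2 η
        rw [ContinuousLinearMap.reApplyInnerSelf_apply, ContinuousLinearMap.add_apply,
          inner_add_left, map_add, adjoint_inner_left] at h2
        have : RCLike.re ((@inner ℂ H _ (x η) η)) = RCLike.re ((@inner ℂ H _ η (x η))) := by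
          rw [← inner_conj_symm η (x η), RCLike.conj_re]
        linarith
      have hexp : ‖(1 + x) η‖ ^ 2 = ‖η‖ ^ 2 + 2 * RCLike.re ((@inner ℂ H _ η (x η))) + ‖x η‖ ^ 2 := by
        have : (1 + x) η = η + x η := by
          simp [ContinuousLinearMap.add_apply]
        rw [this, @norm_add_sq ℂ]
      have hb : ‖x η‖ ≤ ‖x‖ * ‖η‖ := x.le_opNorm η
      have hb2 : ‖x η‖ ^ 2 ≤ ‖x‖ ^ 2 * ‖η‖ ^ 2 := by nlinarith [norm_nonneg (x η), norm_nonneg η]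
      nlinarith [norm_nonneg (x η), norm_nonneg η]
    -- rewrite Ring.inverse via the unit
    rw [← h.unit_spec, Ring.inverse_unit]
    refine ContinuousLinearMap.opNorm_le_bound _ hc (fun ζ => ?_)
    set η : H := (↑h.unit⁻¹ : H →L[ℂ] H) ζ with hη
    have hζ : (1 + x) η = ζ := by
      have h1 : (1 + x) * (↑h.unit⁻¹ : H →L[ℂ] H) = 1 := by
        have h2 := h.unit.mul_inv
        rwa [h.unit_spec] at h2
      calc (1 + x) η = ((1 + x) * ↑h.unit⁻¹) ζ := rfl
        _ = ζ := by rw [h1]; rfl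
    have hk := key η
    rw [hζ] at hk
    show ‖x η‖ ≤ ‖x‖ / Real.sqrt (1 + ‖x‖ ^ 2) * ‖ζ‖
    rw [div_mul_eq_mul_div, le_div_iff₀ hs]
    have hsq : (‖x η‖ * Real.sqrt (1 + ‖x‖ ^ 2)) ^ 2 ≤ (‖x‖ * ‖ζ‖) ^ 2 := by
      rw [mul_pow, mul_pow, hs2]; nlinarith [hk]
    exact (pow_le_pow_iff_left₀ (by positivity) (by positivity) two_ne_zero).mp hsq
  · rw [Ring.inverse_non_unit _ h, mul_zero, norm_zero]
    exact hc
end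

section
/- Let x be a bounded operator on a Hilbert space with x + x* ≥ 0. For every t > 0, the operator tx(I + tx)⁻¹ satisfies ‖I - tx(I + tx)⁻¹‖ ≤ 1, and tx(I + tx)⁻¹ · (1/t) converges in norm to x as t → 0⁺. Consequently x lies in the norm closure of ℝ⁺·{a ∈ B(H) : ‖I - a‖ ≤ 1}. -/
open ContinuousLinearMap

/-!
If `y + y†` is positive then `‖v‖² ≤ re ⟪(1 + y) v, v⟫`, so `1 + y` is bounded below by the
identity in the quadratic-form sense; hence it is invertible and its inverse is a contraction.
Applied to `y = t x` this gives `1 - t x (1 + t x)⁻¹ = (1 + t x)⁻¹` of norm at most `1`, and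
`x (1 + t x)⁻¹ - x = -x (t x) (1 + t x)⁻¹` has norm at most `t ‖x‖²`.
-/

section Accretive

variable {𝕜 E : Type*} [RCLike 𝕜] [NormedAddCommGroup E] [InnerProductSpace 𝕜 E] [CompleteSpace E]

open RCLike

lemma re_inner_map_self_nonneg_of_isPositive_add_adjoint {y : E →L[𝕜] E}
    (hy : (y + adjoint y).IsPositive) (v : E) : 0 ≤ re (inner 𝕜 (y v) v) := by
  have h := hy.re_inner_nonneg_left v
  rw [add_apply, inner_add_left, map_add, adjoint_inner_left, inner_re_symm (𝕜 := 𝕜) v] at h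
  linarith

lemma sq_norm_le_re_inner_one_add_map_self {y : E →L[𝕜] E}
    (hy : (y + adjoint y).IsPositive) (v : E) :
    ‖v‖ ^ 2 ≤ re (inner 𝕜 ((1 + y) v) v) := by
  rw [add_apply, one_apply_eq_self, inner_add_left, map_add, inner_self_eq_norm_sq]
  linarith [re_inner_map_self_nonneg_of_isPositive_add_adjoint hy v]

lemma norm_le_norm_one_add_apply {y : E →L[𝕜] E}
    (hy : (y + adjoint y).IsPositive) (v : E) : ‖v‖ ≤ ‖(1 + y) v‖ := by
  rcases (norm_nonneg v).eq_or_lt with hv | hv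
  · simp [← hv]
  · refine le_of_mul_le_mul_right ?_ hv
    rw [← sq]
    exact (sq_norm_le_re_inner_one_add_map_self hy v).trans (re_inner_le_norm _ _)

lemma isUnit_one_add_of_isPositive_add_adjoint {y : E →L[𝕜] E}
    (hy : (y + adjoint y).IsPositive) : IsUnit (1 + y) :=
  isUnit_of_forall_le_norm_inner_map _ one_pos fun v => by
    simpa using (sq_norm_le_re_inner_one_add_map_self hy v).trans (RCLike.re_le_norm _)

lemma norm_inverse_one_add_le_one_of_isPositive_add_adjoint {y : E →L[𝕜] E}
    (hy : (y + adjoint y).IsPositive) : ‖Ring.inverse (1 + y)‖ ≤ 1 := by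
  obtain ⟨u, hu⟩ := isUnit_one_add_of_isPositive_add_adjoint hy
  rw [← hu, Ring.inverse_unit]
  refine opNorm_le_bound _ zero_le_one fun w => ?_
  have := norm_le_norm_one_add_apply hy (((u⁻¹ : (E →L[𝕜] E)ˣ) : E →L[𝕜] E) w)
  rwa [← hu, ← mul_apply_eq_comp, u.mul_inv, one_apply_eq_self,
    ← one_mul ‖w‖] at this

end Accretive

lemma isPositive_smul_add_adjoint {E : Type*} [NormedAddCommGroup E] [InnerProductSpace ℂ E]
    [CompleteSpace E] {x : E →L[ℂ] E} (hx : (x + adjoint x).IsPositive) {t : ℝ} (ht : 0 ≤ t) :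
    ((t : ℂ) • x + adjoint ((t : ℂ) • x)).IsPositive := by
  rw [map_smulₛₗ, Complex.conj_ofReal, ← smul_add]
  exact hx.smul_of_nonneg (Complex.zero_le_real.mpr ht)

section Resolvent

lemma one_sub_mul_inverse_one_add {R : Type*} [Ring R] {b : R} (hb : IsUnit (1 + b)) :
    1 - b * Ring.inverse (1 + b) = Ring.inverse (1 + b) := by
  rw [sub_eq_iff_eq_add, ← one_add_mul, Ring.mul_inverse_cancel _ hb]

lemma norm_mul_inverse_one_add_sub_le {R : Type*} [NormedRing R] (a : R) {b : R}
    (hb : IsUnit (1 + b)) :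
    ‖a * Ring.inverse (1 + b) - a‖ ≤ ‖a‖ * ‖b‖ * ‖Ring.inverse (1 + b)‖ := by
  have : a * Ring.inverse (1 + b) - a = -(a * (b * Ring.inverse (1 + b))) := by
    conv_lhs => rw [← one_sub_mul_inverse_one_add hb]
    noncomm_ring
  rw [this, norm_neg, ← mul_assoc]
  exact (norm_mul_le _ _).trans (by gcongr; exact norm_mul_le _ _)

variable {A : Type*} [NormedRing A] [NormedAlgebra ℂ A]

lemma tendsto_inv_smul_smul_mul_inverse_one_add {a : A}
    (hunit : ∀ t : ℝ, 0 < t → IsUnit (1 + (t : ℂ) • a))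
    (hnorm : ∀ t : ℝ, 0 < t → ‖Ring.inverse (1 + (t : ℂ) • a)‖ ≤ 1) :
    Filter.Tendsto (fun t : ℝ => (t : ℂ)⁻¹ • (((t : ℂ) • a) * Ring.inverse (1 + (t : ℂ) • a)))
      (nhdsWithin 0 (Set.Ioi 0)) (nhds a) := by
  have hbound : ∀ t : ℝ, 0 < t →
      ‖(t : ℂ)⁻¹ • (((t : ℂ) • a) * Ring.inverse (1 + (t : ℂ) • a)) - a‖ ≤ t * ‖a‖ ^ 2 := by
    intro t ht
    have ht' : (t : ℂ) ≠ 0 := Complex.ofReal_ne_zero.mpr ht.ne'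
    rw [smul_mul_assoc, inv_smul_smul₀ ht']
    calc _ ≤ ‖a‖ * ‖(t : ℂ) • a‖ * ‖Ring.inverse (1 + (t : ℂ) • a)‖ :=
          norm_mul_inverse_one_add_sub_le a (hunit t ht)
      _ ≤ ‖a‖ * ‖(t : ℂ) • a‖ * 1 := by gcongr; exact hnorm t ht
      _ = t * ‖a‖ ^ 2 := by
          rw [norm_smul, Complex.norm_real, Real.norm_of_nonneg ht.le]; ring
  rw [tendsto_iff_norm_sub_tendsto_zero]
  refine squeeze_zero' (Filter.Eventually.of_forall fun _ => norm_nonneg _)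
    (eventually_nhdsWithin_of_forall hbound) ?_
  simpa using (Filter.tendsto_id.mul_const (‖a‖ ^ 2)).mono_left
    (nhdsWithin_le_nhds (a := (0 : ℝ)) (s := Set.Ioi 0))

end Resolvent

/-- If `x ∈ B(H)` has `x + x* ≥ 0`, then for every `t > 0` the operator
`t x (I + t x)⁻¹` lies in `𝔉 = {a : ‖I - a‖ ≤ 1}`, and `(1/t)·(t x (I + t x)⁻¹)`
converges in norm to `x` as `t → 0⁺`.  Consequently `x` lies in the norm
closure of `ℝ⁺ · 𝔉`. -/
theorem stmt5 {H : Type*} [NormedAddCommGroup H] [InnerProductSpace ℂ H]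
    [CompleteSpace H] (x : H →L[ℂ] H) (hx : (x + adjoint x).IsPositive) :
    (∀ t : ℝ, 0 < t →
        ‖1 - ((t : ℂ) • x) * Ring.inverse (1 + (t : ℂ) • x)‖ ≤ 1) ∧
    Filter.Tendsto
      (fun t : ℝ => ((t : ℂ))⁻¹ • (((t : ℂ) • x) * Ring.inverse (1 + (t : ℂ) • x)))
      (nhdsWithin 0 (Set.Ioi 0)) (nhds x) ∧
    x ∈ closure {z : H →L[ℂ] H |
      ∃ (t : ℝ) (a : H →L[ℂ] H), 0 ≤ t ∧ ‖1 - a‖ ≤ 1 ∧ z = (t : ℂ) • a} := by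
  have hunit (t : ℝ) (ht : 0 < t) : IsUnit (1 + (t : ℂ) • x) :=
    isUnit_one_add_of_isPositive_add_adjoint (isPositive_smul_add_adjoint hx ht.le)
  have hnorm (t : ℝ) (ht : 0 < t) : ‖Ring.inverse (1 + (t : ℂ) • x)‖ ≤ 1 :=
    norm_inverse_one_add_le_one_of_isPositive_add_adjoint (isPositive_smul_add_adjoint hx ht.le)
  have hcontr (t : ℝ) (ht : 0 < t) :
      ‖1 - ((t : ℂ) • x) * Ring.inverse (1 + (t : ℂ) • x)‖ ≤ 1 := by
    rw [one_sub_mul_inverse_one_add (hunit t ht)]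
    exact hnorm t ht
  have hlim := tendsto_inv_smul_smul_mul_inverse_one_add hunit hnorm
  refine ⟨hcontr, hlim, mem_closure_of_tendsto hlim (eventually_nhdsWithin_of_forall ?_)⟩
  exact fun t ht => ⟨t⁻¹, _, inv_nonneg.mpr (le_of_lt ht), hcontr t ht, by rw [Complex.ofReal_inv]⟩
end

section
/- An operator x in B(H) satisfies x + x* ≥ C·x*x for some constant C > 0 if and only if x ∈ ℝ⁺·{a ∈ B(H) : ‖I - a‖ ≤ 1}, i.e. x = t·a for some t ≥ 0 and a with ‖I - a‖ ≤ 1. -/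
/-!
For `c > 0` one has `(1 - c x)* (1 - c x) = 1 - c (x + x* - c x*x)`, so by the C*-identity
`‖1 - c x‖ ≤ 1` holds exactly when `x + x* - c x*x ≥ 0`. Hence `x + x* ≥ C x*x` means that
`a = C x` satisfies `‖1 - a‖ ≤ 1`, and conversely `x = t a` with `t > 0` satisfies the inequality
with `C = t⁻¹`.
-/

open ContinuousLinearMap

theorem star_mul_self_one_sub_smul {A : Type*} [Ring A] [StarRing A] [Algebra ℝ A]
    [StarModule ℝ A] (c : ℝ) (x : A) :
    star (1 - c • x) * (1 - c • x) = 1 - c • (x + star x - c • (star x * x)) := by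
  simp only [star_sub, star_one, star_smul, star_trivial, sub_mul, mul_sub, one_mul, mul_one,
    smul_mul_assoc, mul_smul_comm]
  module

section CStarAlgebra

variable {A : Type*} [CStarAlgebra A] [PartialOrder A] [StarOrderedRing A]

theorem CStarRing.norm_le_one_iff_star_mul_self_le_one (b : A) : ‖b‖ ≤ 1 ↔ star b * b ≤ 1 := by
  rw [← CStarAlgebra.norm_le_one_iff_of_nonneg (star b * b) (star_mul_self_nonneg b),
    CStarRing.norm_star_mul_self, ← abs_le_one_iff_mul_self_le_one, abs_norm]

theorem CStarAlgebra.norm_one_sub_smul_le_one_iff {c : ℝ} (hc : 0 < c) (x : A) :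
    ‖1 - c • x‖ ≤ 1 ↔ 0 ≤ x + star x - c • (star x * x) := by
  rw [CStarRing.norm_le_one_iff_star_mul_self_le_one, star_mul_self_one_sub_smul,
    sub_le_self_iff, smul_nonneg_iff_nonneg_of_pos_left hc]

end CStarAlgebra

theorem ContinuousLinearMap.isPositive_add_adjoint_sub_smul_iff {H : Type*}
    [NormedAddCommGroup H] [InnerProductSpace ℂ H] [CompleteSpace H] {c : ℝ} (hc : 0 < c)
    (x : H →L[ℂ] H) :
    (x + adjoint x - (c : ℂ) • (adjoint x * x)).IsPositive ↔ ‖1 - (c : ℂ) • x‖ ≤ 1 := by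
  rw [← nonneg_iff_isPositive, ← star_eq_adjoint, Complex.coe_smul, Complex.coe_smul,
    CStarAlgebra.norm_one_sub_smul_le_one_iff hc]

/-- `x ∈ B(H)` satisfies `x + x* ≥ C·x*x` for some constant `C > 0` if and only
if `x ∈ ℝ⁺·𝔉`, i.e. `x = t • a` for some `t ≥ 0` and `a` with `‖I - a‖ ≤ 1`. -/
theorem stmt7 {H : Type*} [NormedAddCommGroup H] [InnerProductSpace ℂ H]
    [CompleteSpace H] (x : H →L[ℂ] H) :
    (∃ C : ℝ, 0 < C ∧ (x + adjoint x - (C : ℂ) • (adjoint x * x)).IsPositive) ↔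
      ∃ (t : ℝ) (a : H →L[ℂ] H), 0 ≤ t ∧ ‖1 - a‖ ≤ 1 ∧ x = (t : ℂ) • a := by
  constructor
  · rintro ⟨C, hC, hpos⟩
    refine ⟨C⁻¹, (C : ℂ) • x, inv_nonneg.2 hC.le,
      (isPositive_add_adjoint_sub_smul_iff hC x).1 hpos, ?_⟩
    rw [smul_smul, ← Complex.ofReal_mul, inv_mul_cancel₀ hC.ne', Complex.ofReal_one, one_smul]
  · rintro ⟨t, a, ht, ha, rfl⟩
    rcases ht.eq_or_lt with rfl | ht
    · exact ⟨1, one_pos, by simp⟩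
    · refine ⟨t⁻¹, inv_pos.2 ht, (isPositive_add_adjoint_sub_smul_iff (inv_pos.2 ht) _).2 ?_⟩
      rwa [smul_smul, ← Complex.ofReal_mul, inv_mul_cancel₀ ht.ne', Complex.ofReal_one, one_smul]
end

section
/- Let A = C + c₀ + ℂI ⊆ B(ℓ²), where C is the first column of compact operators (matrices supported in the first column with ℓ² entries) and c₀ is the main diagonal with entries tending to 0. Let J ⊆ A be the set of diagonal matrices with zero (1,1) entry and diagonal in c₀. Let b ∈ A be the matrix with diagonal all 1's and first column v ∈ ℓ² with v_j ≠ 0 for all j (and v₁ = 1). Then the distance d(b, J) = ‖v‖₂ and this distance is not attained: there is no y ∈ J with ‖b - y‖ = ‖v‖₂. -/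
/-!
Testing `b - y` on the first basis vector `e₀` gives `‖b - y‖ ≥ ‖(b - y) e₀‖ = ‖v‖` for every
`y ∈ J`. Conversely, removing the diagonal entries `1, …, N - 1` of `b` leaves the operator
`ζ ↦ ζ₀ v + (0, …, 0, ζ_N, ζ_{N+1}, …)`, whose norm squared is at most `‖v‖² + η` as soon as the
tail `∑_{k ≥ N} |v_k|²` is below `η²` (weighted AM-GM on the coordinates `k ≥ N`, using
`‖v‖ ≥ |v₀| = 1`).

If `‖b - y‖ = ‖v‖` for some `y ∈ J` with diagonal `d`, then `e₀` is a norm-attaining vector of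
`T = b - y`, so `Re ⟪T e₀, T h⟫ = ‖T‖² Re ⟪e₀, h⟫` for all `h`. Since `T e_j = (1 - d_j) e_j`,
taking `h` along `e_j` gives `v_j (1 - d_j) = 0`, hence `d_j = 1` for every `j ≥ 1`, contradicting
`d_j → 0`.
-/

open Filter

/-- `ℓ²` of complex sequences indexed by `ℕ` (index `0` playing the role of the
"first" coordinate). -/
noncomputable abbrev Ell2 : Type := lp (fun _ : ℕ => ℂ) 2

/-- `MatRep v d T` says the operator `T` on `ℓ²` is given by the infinite matrix
whose first column is `v` and whose remaining diagonal entries are `d j`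
(`j ≥ 1`), all other entries being `0`:
`(Tζ)_0 = v_0 ζ_0` and `(Tζ)_j = v_j ζ_0 + d_j ζ_j` for `j ≥ 1`. -/
def MatRep (v d : ℕ → ℂ) (T : Ell2 →L[ℂ] Ell2) : Prop :=
  ∀ (ζ : Ell2) (j : ℕ),
    (T ζ : ∀ _ : ℕ, ℂ) j = v j * (ζ : ∀ _ : ℕ, ℂ) 0 +
      (if j = 0 then 0 else d j * (ζ : ∀ _ : ℕ, ℂ) j)

/-- The left ideal `J ⊆ A`: diagonal matrices with zero first (i.e. `(1,1)`)
entry and diagonal tending to `0`. -/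
def Jset : Set (Ell2 →L[ℂ] Ell2) :=
  {T | ∃ d : ℕ → ℂ, Tendsto d atTop (nhds 0) ∧ MatRep (fun _ => 0) d T}

open scoped ComplexConjugate Topology

theorem ContinuousLinearMap.opNorm_sq_le_of_norm_apply_sq_le {𝕜 E F : Type*}
    [NontriviallyNormedField 𝕜] [SeminormedAddCommGroup E] [NormedSpace 𝕜 E]
    [SeminormedAddCommGroup F] [NormedSpace 𝕜 F] (T : E →L[𝕜] F) {K : ℝ}
    (hK : 0 ≤ K) (h : ∀ x, ‖T x‖ ^ 2 ≤ K * ‖x‖ ^ 2) : ‖T‖ ^ 2 ≤ K := by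
  have hT : ‖T‖ ≤ √K := T.opNorm_le_bound (Real.sqrt_nonneg K) fun x => by
    rw [← pow_le_pow_iff_left₀ (norm_nonneg _) (by positivity) two_ne_zero, mul_pow,
      Real.sq_sqrt hK]
    exact h x
  calc ‖T‖ ^ 2 ≤ √K ^ 2 := pow_le_pow_left₀ (norm_nonneg _) hT 2
    _ = K := Real.sq_sqrt hK

open RCLike in
theorem ContinuousLinearMap.re_inner_apply_apply_eq_of_norm_apply_eq {𝕜 E F : Type*}
    [RCLike 𝕜] [NormedAddCommGroup E] [InnerProductSpace 𝕜 E] [NormedAddCommGroup F]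
    [InnerProductSpace 𝕜 F] (T : E →L[𝕜] F) {x : E} (hx : ‖T x‖ = ‖T‖ * ‖x‖) (h : E) :
    re (inner 𝕜 (T x) (T h)) = ‖T‖ ^ 2 * re (inner 𝕜 x h) := by
  -- `t ↦ ‖T‖² ‖x + t h‖² - ‖T (x + t h)‖²` is a nonnegative quadratic vanishing at `t = 0`,
  -- so its linear coefficient vanishes.
  have hquad : ∀ t : ℝ, 0 ≤ (‖T‖ ^ 2 * ‖h‖ ^ 2 - ‖T h‖ ^ 2) * (t * t)
      + (2 * (‖T‖ ^ 2 * re (inner 𝕜 x h) - re (inner 𝕜 (T x) (T h)))) * t + 0 := by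
    intro t
    have hle : ‖T (x + (t : 𝕜) • h)‖ ^ 2 ≤ (‖T‖ * ‖x + (t : 𝕜) • h‖) ^ 2 :=
      pow_le_pow_left₀ (norm_nonneg _) (T.le_opNorm _) 2
    rw [map_add, map_smul, mul_pow, norm_add_sq (𝕜 := 𝕜), norm_add_sq (𝕜 := 𝕜),
      inner_smul_right, inner_smul_right, re_ofReal_mul, re_ofReal_mul, norm_smul, norm_smul,
      norm_ofReal, hx] at hle
    simp only [mul_pow, sq_abs] at hle
    linarith
  have := discrim_le_zero hquad
  rw [discrim] at this
  nlinarith [sq_nonneg (‖T‖ ^ 2 * re (inner 𝕜 x h) - re (inner 𝕜 (T x) (T h)))]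

theorem Ell2.hasSum_norm_sq (f : Ell2) : HasSum (fun j => ‖f j‖ ^ 2) (‖f‖ ^ 2) := by
  have h := lp.hasSum_norm (p := 2) (by norm_num) f
  simp only [ENNReal.toReal_ofNat, Real.rpow_two] at h
  exact h

theorem Ell2.hasSum_norm_sq_nat_add (f : Ell2) (N : ℕ) :
    HasSum (fun i => ‖f (i + N)‖ ^ 2) (‖f‖ ^ 2 - ∑ k ∈ Finset.range N, ‖f k‖ ^ 2) :=
  (hasSum_nat_add_iff' N).mpr (Ell2.hasSum_norm_sq f)

theorem norm_add_sq_le_of_pos {E : Type*} [SeminormedAddGroup E] {η : ℝ} (hη : 0 < η)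
    (x y : E) : ‖x + y‖ ^ 2 ≤ (1 + η⁻¹) * ‖x‖ ^ 2 + (1 + η) * ‖y‖ ^ 2 := by
  have hsq : 0 ≤ η⁻¹ * (‖x‖ - η * ‖y‖) ^ 2 := by positivity
  have hη' : η⁻¹ * η = 1 := inv_mul_cancel₀ hη.ne'
  calc ‖x + y‖ ^ 2 ≤ (‖x‖ + ‖y‖) ^ 2 := pow_le_pow_left₀ (norm_nonneg _) (norm_add_le x y) 2
    _ ≤ (1 + η⁻¹) * ‖x‖ ^ 2 + (1 + η) * ‖y‖ ^ 2 := by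
      have : η⁻¹ * (‖x‖ - η * ‖y‖) ^ 2
          = η⁻¹ * ‖x‖ ^ 2 - 2 * (η⁻¹ * η) * ‖x‖ * ‖y‖ + (η⁻¹ * η) * η * ‖y‖ ^ 2 := by ring
      rw [this, hη'] at hsq
      linarith

noncomputable def Ell2.projIco (N : ℕ) : Ell2 →L[ℂ] Ell2 :=
  ∑ j ∈ Finset.Ico 1 N,
    (lp.singleContinuousLinearMap ℂ (fun _ : ℕ => ℂ) 2 j).comp (lp.evalCLM ℂ _ 2 j)

theorem Ell2.matRep_projIco (N : ℕ) :
    MatRep (fun _ => 0) (fun k => if k < N then 1 else 0) (Ell2.projIco N) := by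
  intro ζ k
  have hk : Ell2.projIco N ζ k = if k ∈ Finset.Ico 1 N then ζ k else 0 := by
    simp only [Ell2.projIco, sum_apply, lp.coeFn_sum, Finset.sum_apply]
    exact Finset.sum_pi_single k ζ _
  rw [hk]
  by_cases hk0 : k = 0 <;> simp [hk0, Nat.one_le_iff_ne_zero]

theorem Ell2.projIco_mem_Jset (N : ℕ) : Ell2.projIco N ∈ Jset :=
  ⟨_, tendsto_const_nhds.congr' ((eventually_ge_atTop N).mono fun k hk => by
    simp [not_lt.2 hk]), Ell2.matRep_projIco N⟩

namespace MatRep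

variable {v d : ℕ → ℂ} {T : Ell2 →L[ℂ] Ell2}

theorem sub_diag {d' : ℕ → ℂ} {T' : Ell2 →L[ℂ] Ell2} (hT : MatRep v d T)
    (hT' : MatRep (fun _ => 0) d' T') : MatRep v (fun j => d j - d' j) (T - T') := by
  intro ζ j
  rw [sub_apply, lp.coeFn_sub, Pi.sub_apply, hT, hT']
  split_ifs <;> ring

theorem apply_single_zero {V : Ell2} (hT : MatRep V d T) : T (lp.single 2 0 1) = V := by
  ext j
  rw [hT]
  by_cases hj : j = 0 <;> simp [hj]

theorem apply_single (hT : MatRep v d T) {j : ℕ} (hj : j ≠ 0) (c : ℂ) :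
    T (lp.single 2 j c) = lp.single 2 j (d j * c) := by
  ext k
  rw [hT]
  by_cases hk : k = j
  · subst hk; simp [hj]
  · by_cases hk0 : k = 0 <;> simp [hk, hk0, Ne.symm hj]

theorem norm_le_opNorm {V : Ell2} (hT : MatRep V d T) : ‖V‖ ≤ ‖T‖ := by
  simpa [hT.apply_single_zero] using T.le_opNorm (lp.single 2 0 1)

theorem diag_eq_zero_of_opNorm_eq {V : Ell2} (hT : MatRep V d T) (hnorm : ‖T‖ = ‖V‖)
    {j : ℕ} (hj : j ≠ 0) (hVj : V j ≠ 0) : d j = 0 := by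
  have hattain : ‖T (lp.single 2 0 1)‖ = ‖T‖ * ‖(lp.single 2 0 1 : Ell2)‖ := by
    simp [hT.apply_single_zero, hnorm]
  have key := T.re_inner_apply_apply_eq_of_norm_apply_eq hattain
    (lp.single 2 j (V j * conj (d j)))
  rw [hT.apply_single_zero, hT.apply_single hj, lp.inner_single_right, lp.inner_single_right,
    lp.single_apply_ne 2 0 _ hj, inner_zero_left, RCLike.inner_apply'] at key
  have hprod : conj (V j) * (d j * (V j * conj (d j)))
      = ((Complex.normSq (V j) * Complex.normSq (d j) : ℝ) : ℂ) := by
    rw [Complex.ofReal_mul, Complex.normSq_eq_conj_mul_self, ← Complex.mul_conj]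
    ring
  rw [hprod] at key
  simpa [hVj] using key

theorem opNorm_sq_le_of_tail_le {V : Ell2} (hV : 1 ≤ ‖V‖) {N : ℕ} (hN : 0 < N) {η : ℝ}
    (hη : 0 < η) (htail : ∑' i, ‖V (i + N)‖ ^ 2 ≤ η ^ 2)
    (hT : MatRep V (fun k => if k < N then 0 else 1) T) : ‖T‖ ^ 2 ≤ ‖V‖ ^ 2 + η := by
  refine T.opNorm_sq_le_of_norm_apply_sq_le (by positivity) fun ζ => ?_
  set a := ‖ζ 0‖ ^ 2
  set PV := ∑ k ∈ Finset.range N, ‖V k‖ ^ 2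
  set Pζ := ∑ k ∈ Finset.range N, ‖ζ k‖ ^ 2
  have hhead : ∑ k ∈ Finset.range N, ‖T ζ k‖ ^ 2 = a * PV := by
    rw [Finset.mul_sum]
    refine Finset.sum_congr rfl fun k hk => ?_
    rw [hT]
    dsimp only
    rw [if_pos (Finset.mem_range.1 hk)]
    split_ifs <;> simp [a, mul_pow, mul_comm]
  have hpoint : ∀ i, ‖T ζ (i + N)‖ ^ 2 ≤
      (1 + η⁻¹) * a * ‖V (i + N)‖ ^ 2 + (1 + η) * ‖ζ (i + N)‖ ^ 2 := by
    intro i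
    rw [hT]
    dsimp only
    rw [if_neg (by omega : i + N ≠ 0), if_neg (by omega : ¬i + N < N), one_mul]
    refine (norm_add_sq_le_of_pos hη _ _).trans_eq ?_
    rw [norm_mul, mul_pow]
    ring
  have htailT := hasSum_le hpoint (Ell2.hasSum_norm_sq_nat_add (T ζ) N)
    (((Ell2.hasSum_norm_sq_nat_add V N).mul_left _).add
      ((Ell2.hasSum_norm_sq_nat_add ζ N).mul_left _))
  rw [(Ell2.hasSum_norm_sq_nat_add V N).tsum_eq] at htail
  have hδ : η⁻¹ * (‖V‖ ^ 2 - PV) ≤ η := by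
    rw [inv_mul_le_iff₀ hη]; nlinarith
  have hζ0 : 0 ≤ ‖ζ‖ ^ 2 - Pζ :=
    (Ell2.hasSum_norm_sq_nat_add ζ N).nonneg fun _ => by positivity
  have ha : a ≤ Pζ := Finset.single_le_sum (f := fun k => ‖ζ k‖ ^ 2)
    (fun _ _ => by positivity) (Finset.mem_range.2 hN)
  have hL : 1 ≤ ‖V‖ ^ 2 := one_le_pow₀ hV
  nlinarith [mul_le_mul_of_nonneg_left hδ (by positivity : 0 ≤ a),
    mul_le_mul_of_nonneg_right hL hζ0, mul_le_mul_of_nonneg_left ha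
      (by positivity : 0 ≤ ‖V‖ ^ 2 + η)]

theorem exists_mem_Jset_norm_sub_sq_le {V : Ell2} {b : Ell2 →L[ℂ] Ell2}
    (hb : MatRep V (fun _ => 1) b) (hV : 1 ≤ ‖V‖) {η : ℝ} (hη : 0 < η) :
    ∃ y ∈ Jset, ‖b - y‖ ^ 2 ≤ ‖V‖ ^ 2 + η := by
  have htail : Tendsto (fun N => ∑' i, ‖V (i + N)‖ ^ 2) atTop (𝓝 0) :=
    tendsto_sum_nat_add fun k => ‖V k‖ ^ 2
  obtain ⟨N, hN, hsmall⟩ := ((eventually_ge_atTop 1).and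
    ((tendsto_order.1 htail).2 _ (by positivity : 0 < η ^ 2))).exists
  refine ⟨_, Ell2.projIco_mem_Jset N, opNorm_sq_le_of_tail_le hV hN hη hsmall.le ?_⟩
  convert hb.sub_diag (Ell2.matRep_projIco N) using 2 with k
  split_ifs <;> simp

end MatRep

/-- (Theorem 2.3 of Blecher–Read, the key computation.)  With `b ∈ A` the
matrix with all-ones diagonal and first column `v ∈ ℓ²` having all entries
nonzero (and `v_1 = 1`), the distance from `b` to `J` is `‖v‖₂`, and this
distance is not attained. -/
theorem stmt9 (v : ℕ → ℂ) (hv : Memℓp v 2) (hv0 : v 0 = 1)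
    (hvj : ∀ j, v j ≠ 0) (b : Ell2 →L[ℂ] Ell2) (hb : MatRep v (fun _ => 1) b) :
    Metric.infDist b Jset = ‖(⟨v, hv⟩ : Ell2)‖ ∧
      ∀ y ∈ Jset, ‖b - y‖ ≠ ‖(⟨v, hv⟩ : Ell2)‖ := by
  set V : Ell2 := ⟨v, hv⟩
  have hV : 1 ≤ ‖V‖ := by
    simpa [V, hv0] using lp.norm_apply_le_norm two_ne_zero V 0
  have hdist : Metric.infDist b Jset = ‖V‖ := by
    refine le_antisymm ?_ ((Metric.le_infDist ⟨_, Ell2.projIco_mem_Jset 0⟩).2 ?_)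
    · refine (pow_le_pow_iff_left₀ Metric.infDist_nonneg (norm_nonneg _) two_ne_zero).1
        (le_of_forall_pos_le_add fun η hη => ?_)
      obtain ⟨y, hy, hle⟩ := hb.exists_mem_Jset_norm_sub_sq_le hV hη
      refine le_trans (pow_le_pow_left₀ Metric.infDist_nonneg ?_ 2) hle
      exact (Metric.infDist_le_dist_of_mem hy).trans_eq (dist_eq_norm _ _)
    · rintro y ⟨d, -, hy⟩
      exact (hb.sub_diag hy).norm_le_opNorm.trans_eq (dist_eq_norm _ _).symm
  refine ⟨hdist, fun y ⟨d, hd, hy⟩ hnorm => ?_⟩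
  have hd1 : ∀ j ≠ 0, d j = 1 := fun j hj =>
    (sub_eq_zero.1 ((hb.sub_diag hy).diag_eq_zero_of_opNorm_eq hnorm hj (hvj j))).symm
  have hd1' : Tendsto d atTop (𝓝 1) := tendsto_const_nhds.congr'
    ((eventually_ge_atTop 1).mono fun j hj => (hd1 j (by omega)).symm)
  exact one_ne_zero (tendsto_nhds_unique hd1' hd)
end

section
/- In the setting of the two-column estimate: if c is an operator from ℂ² to ℓ² given by a matrix with two columns, the first being v ∈ ℓ² and the second having exactly one nonzero entry w in some row j > 1, and if ‖c‖ = ‖v‖₂, then v̄_j · w = 0, i.e. w = 0 (since v_j ≠ 0). -/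
/-!
A vector `u` at which `T` attains its norm is an eigenvector of `T* T`, so `T` maps vectors
orthogonal to `u` to vectors orthogonal to `T u`. For `c` and `u = e₀` this says
`⟪c e₀, c e₁⟫ = w · conj (v j) = 0`.
-/

open RCLike ComplexConjugate InnerProductSpace

variable {𝕜 E F : Type*} [RCLike 𝕜] [NormedAddCommGroup E] [InnerProductSpace 𝕜 E]
  [NormedAddCommGroup F] [InnerProductSpace 𝕜 F]

theorem ContinuousLinearMap.inner_apply_eq_zero_of_norm_apply_eq_opNorm_mul (T : E →L[𝕜] F)
    {u x : E} (hu : ‖T u‖ = ‖T‖ * ‖u‖) (hux : ⟪u, x⟫_𝕜 = 0) : ⟪T u, T x⟫_𝕜 = 0 := by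
  set a := ⟪T u, T x⟫_𝕜
  set K := ‖T‖ ^ 2 * ‖x‖ ^ 2
  -- Moving `u` by `r • conj a • x` raises `‖T u‖²` at first order in `r` and `‖u‖²` only at second.
  have key : ∀ r : ℝ, 0 < r → 2 * r * ‖a‖ ^ 2 ≤ r ^ 2 * ‖a‖ ^ 2 * K := by
    intro r hr
    set s : 𝕜 := (r : 𝕜) * conj a
    have hsa : re (s * a) = r * ‖a‖ ^ 2 := by
      rw [mul_assoc, RCLike.conj_mul, ← ofReal_pow, ← ofReal_mul, ofReal_re]
    have hs : ‖s‖ = r * ‖a‖ := by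
      rw [norm_mul, norm_conj, norm_ofReal, abs_of_pos hr]
    have lower : ‖T u‖ ^ 2 + 2 * (r * ‖a‖ ^ 2) ≤ ‖T (u + s • x)‖ ^ 2 := by
      rw [map_add, map_smul, norm_add_sq (𝕜 := 𝕜), inner_smul_right, hsa]
      nlinarith [sq_nonneg ‖s • T x‖]
    have upper : ‖T (u + s • x)‖ ^ 2 ≤ ‖T‖ ^ 2 * (‖u‖ ^ 2 + ‖s‖ ^ 2 * ‖x‖ ^ 2) := by
      have horth : ⟪u, s • x⟫_𝕜 = 0 := by rw [inner_smul_right, hux, mul_zero]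
      calc ‖T (u + s • x)‖ ^ 2 ≤ (‖T‖ * ‖u + s • x‖) ^ 2 :=
            pow_le_pow_left₀ (norm_nonneg _) (T.le_opNorm _) 2
        _ = ‖T‖ ^ 2 * (‖u‖ ^ 2 + ‖s‖ ^ 2 * ‖x‖ ^ 2) := by
          rw [mul_pow, norm_add_sq (𝕜 := 𝕜), horth, map_zero, mul_zero, add_zero, norm_smul,
            mul_pow]
    rw [hu] at lower
    rw [hs] at upper
    linear_combination lower + upper
  by_contra ha
  have ha2 : 0 < ‖a‖ ^ 2 := by positivity
  have hK : 0 ≤ K := by positivity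
  have := key (1 / (K + 1)) (by positivity)
  field_simp at this
  nlinarith

theorem stmt10_general (v : ℕ → ℂ) (hv : Memℓp v 2) (hvj : ∀ k, v k ≠ 0)
    (j : ℕ) (w : ℂ)
    (c : EuclideanSpace ℂ (Fin 2) →L[ℂ] lp (fun _ : ℕ => ℂ) 2)
    (hc : ∀ (ζ : EuclideanSpace ℂ (Fin 2)) (k : ℕ),
      (c ζ : ∀ _ : ℕ, ℂ) k = v k * ζ 0 + (if k = j then w * ζ 1 else 0))
    (hnorm : ‖c‖ = ‖(⟨v, hv⟩ : lp (fun _ : ℕ => ℂ) 2)‖) :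
    w = 0 := by
  set e : Fin 2 → EuclideanSpace ℂ (Fin 2) := fun i => EuclideanSpace.single i 1
  have hc₀ : c (e 0) = ⟨v, hv⟩ := lp.ext <| funext fun k => by simp [e, hc]
  have hc₁ : ∀ k, (c (e 1) : ∀ _ : ℕ, ℂ) k = if k = j then w else 0 := fun k => by
    simp [e, hc]
  have hattained : ‖c (e 0)‖ = ‖c‖ * ‖e 0‖ := by simp [e, hc₀, hnorm]
  have horth : ⟪e 0, e 1⟫_ℂ = 0 := by simp [e, EuclideanSpace.inner_single_left]
  have hinner : ⟪c (e 0), c (e 1)⟫_ℂ = w * conj (v j) := by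
    rw [lp.inner_eq_tsum]
    simp [hc₀, hc₁]
  have := c.inner_apply_eq_zero_of_norm_apply_eq_opNorm_mul hattained horth
  rw [hinner] at this
  simpa [hvj j] using this

/-- The two-column estimate: let `c : ℂ² → ℓ²` be the operator whose matrix has
first column `v ∈ ℓ²` (all entries nonzero) and second column `w·e_j` for some
row `j > 0` (indices starting at `0`).  If `‖c‖ = ‖v‖₂` then `w = 0`. -/
theorem stmt10 (v : ℕ → ℂ) (hv : Memℓp v 2) (hvj : ∀ k, v k ≠ 0)
    (j : ℕ) (hj : j ≠ 0) (w : ℂ)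
    (c : EuclideanSpace ℂ (Fin 2) →L[ℂ] lp (fun _ : ℕ => ℂ) 2)
    (hc : ∀ (ζ : EuclideanSpace ℂ (Fin 2)) (k : ℕ),
      (c ζ : ∀ _ : ℕ, ℂ) k = v k * ζ 0 + (if k = j then w * ζ 1 else 0))
    (hnorm : ‖c‖ = ‖(⟨v, hv⟩ : lp (fun _ : ℕ => ℂ) 2)‖) :
    w = 0 :=
  stmt10_general v hv hvj j w c hc hnorm
end

section
/- Let A be a closed subalgebra of B(H) and let x ∈ A with x + x* ≥ 0. Set y = x(I + x)⁻¹ (a well-defined element of the closed algebra generated by x). Then the closed subalgebra of B(H) generated by x equals the closed subalgebra generated by y; in particular x = y(I - y)⁻¹ with (I - y)⁻¹ belonging to the closed unital algebra generated by y. -/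
/-!
Since `x` is accretive, `1 + x` is uniformly accretive (`re ⟪(1 + x) v, v⟫ ≥ ‖v‖²`), and the
inverse `1 - y = (1 + x)⁻¹` of a uniformly accretive operator is again uniformly accretive.
A uniformly accretive `z` satisfies `‖1 - ε z‖ < 1` for some `ε > 0`, so the Neumann series
puts `z⁻¹` in the closed unital algebra generated by `z`. Hence `y = x (1 + x)⁻¹` lies in the
closed algebra generated by `x`, and `x = y (1 - y)⁻¹` in the closed algebra generated by `y`.
-/

open ContinuousLinearMap

open RCLike InnerProductSpace

theorem Ring.inverse_smul {𝕜 A : Type*} [Field 𝕜] [Ring A] [Algebra 𝕜 A] (c : 𝕜) (z : A) :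
    Ring.inverse (c • z) = c⁻¹ • Ring.inverse z := by
  obtain rfl | hc := eq_or_ne c 0
  · simp
  by_cases hz : IsUnit z
  · obtain ⟨u, rfl⟩ := hz
    simpa [Units.smul_def] using Ring.inverse_unit (Units.mk0 c hc • u)
  · have : ¬IsUnit (c • z) := by
      rwa [← Units.smul_mk0 hc, isUnit_smul_iff]
    rw [Ring.inverse_non_unit _ hz, Ring.inverse_non_unit _ this, smul_zero]

namespace Algebra

variable {R A : Type*} [CommRing R] [Ring A] [Algebra R A]

theorem adjoin_singleton_one_add (x : A) : adjoin R {1 + x} = adjoin R {x} :=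
  le_antisymm
    (adjoin_le <| by simpa using add_mem (one_mem _) (self_mem_adjoin_singleton R x))
    (adjoin_le <| by simpa using sub_mem (self_mem_adjoin_singleton R (1 + x)) (one_mem _))

theorem adjoin_singleton_one_sub (x : A) : adjoin R {1 - x} = adjoin R {x} :=
  le_antisymm
    (adjoin_le <| by simpa using sub_mem (one_mem _) (self_mem_adjoin_singleton R x))
    (adjoin_le <| by simpa using sub_mem (one_mem _) (self_mem_adjoin_singleton R (1 - x)))

theorem mul_mem_nonUnitalAdjoin_singleton {x a : A} (ha : a ∈ adjoin R {x}) :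
    x * a ∈ NonUnitalAlgebra.adjoin R {x} := by
  suffices ∀ n ∈ NonUnitalAlgebra.adjoin R {x}, n * a ∈ NonUnitalAlgebra.adjoin R {x} from
    this x (NonUnitalAlgebra.self_mem_adjoin_singleton R x)
  induction ha using adjoin_induction with
  | mem b hb =>
    rw [Set.mem_singleton_iff.mp hb]
    exact fun n hn ↦ mul_mem hn (NonUnitalAlgebra.self_mem_adjoin_singleton R x)
  | algebraMap r =>
    intro n hn
    rw [algebraMap_eq_smul_one, mul_smul_comm, mul_one]
    exact SMulMemClass.smul_mem r hn
  | add b c _ _ hb hc => exact fun n hn ↦ mul_add n b c ▸ add_mem (hb n hn) (hc n hn)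
  | mul b c _ _ hb hc => exact fun n hn ↦ (mul_assoc n b c).symm ▸ hc _ (hb n hn)

section Topology

variable [TopologicalSpace A] [IsSemitopologicalSemiring A] [ContinuousConstSMul R A]

theorem mul_mem_topologicalClosure_nonUnitalAdjoin_singleton {x a : A}
    (ha : a ∈ (adjoin R {x}).topologicalClosure) :
    x * a ∈ (NonUnitalAlgebra.adjoin R {x}).topologicalClosure :=
  map_mem_closure (continuous_const_mul x) ha fun _ hb ↦ mul_mem_nonUnitalAdjoin_singleton hb

end Topology

end Algebra

theorem NonUnitalAlgebra.topologicalClosure_adjoin_singleton_le {R A : Type*} [CommSemiring R]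
    [NonUnitalSemiring A] [Module R A] [IsScalarTower R A A] [SMulCommClass R A A]
    [TopologicalSpace A] [IsSemitopologicalSemiring A] [ContinuousConstSMul R A]
    {x : A} {S : NonUnitalSubalgebra R A} (hx : x ∈ S.topologicalClosure) :
    (adjoin R {x}).topologicalClosure ≤ S.topologicalClosure :=
  NonUnitalSubalgebra.topologicalClosure_minimal (adjoin_le (Set.singleton_subset_iff.mpr hx))
    S.isClosed_topologicalClosure

section NormedAlgebra

variable {𝕜 A : Type*} [NormedField 𝕜] [NormedRing A] [NormedAlgebra 𝕜 A]
  [HasSummableGeomSeries A]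

theorem isUnit_of_norm_one_sub_smul_lt_one_s19 {z : A} {c : 𝕜} (hc : c ≠ 0)
    (h : ‖1 - c • z‖ < 1) : IsUnit z := by
  have := isUnit_one_sub_of_norm_lt_one h
  rwa [sub_sub_cancel, ← Units.smul_mk0 hc, isUnit_smul_iff] at this

namespace Subalgebra

theorem inverse_mem_topologicalClosure {S : Subalgebra 𝕜 A} {z : A} (hz : z ∈ S)
    (h : ‖1 - z‖ < 1) : Ring.inverse z ∈ S.topologicalClosure := by
  have hsum := hasSum_geom_series_inverse (1 - z) h
  rw [sub_sub_cancel] at hsum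
  have h1z : 1 - z ∈ S := sub_mem (one_mem S) hz
  exact S.isClosed_topologicalClosure.mem_of_tendsto hsum.tendsto_sum_nat
    (.of_forall fun n ↦ S.le_topologicalClosure (sum_mem fun i _ ↦ pow_mem h1z i))

theorem inverse_mem_topologicalClosure_of_norm_one_sub_smul_lt_one {S : Subalgebra 𝕜 A} {z : A}
    (hz : z ∈ S) {c : 𝕜} (hc : c ≠ 0) (h : ‖1 - c • z‖ < 1) :
    Ring.inverse z ∈ S.topologicalClosure := by
  rw [← smul_inv_smul₀ hc (Ring.inverse z), ← Ring.inverse_smul]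
  exact smul_mem _ (inverse_mem_topologicalClosure (smul_mem S hz c) h) c

end Subalgebra

end NormedAlgebra

namespace ContinuousLinearMap

theorem opNorm_lt_one_of_forall_sq_le {𝕜 E F : Type*} [NontriviallyNormedField 𝕜]
    [SeminormedAddCommGroup E] [SeminormedAddCommGroup F] [NormedSpace 𝕜 E] [NormedSpace 𝕜 F]
    {t : E →L[𝕜] F} {D : ℝ} (hD : D < 1) (h : ∀ v, ‖t v‖ ^ 2 ≤ D * ‖v‖ ^ 2) : ‖t‖ < 1 := by
  refine (opNorm_le_bound t (Real.sqrt_nonneg (max D 0)) fun v ↦ ?_).trans_lt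
    ((Real.sqrt_lt' one_pos).mpr (by simpa using max_lt hD one_pos))
  rw [← Real.sqrt_sq (norm_nonneg (t v)), ← Real.sqrt_sq (norm_nonneg v),
    ← Real.sqrt_mul (le_max_right D 0)]
  exact Real.sqrt_le_sqrt ((h v).trans (by gcongr; exact le_max_left D 0))

variable {𝕜 E : Type*} [RCLike 𝕜] [NormedAddCommGroup E] [InnerProductSpace 𝕜 E]

def IsUniformlyAccretive (z : E →L[𝕜] E) : Prop :=
  ∃ c > 0, ∀ v, c * ‖v‖ ^ 2 ≤ re ⟪z v, v⟫_𝕜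

theorem isUniformlyAccretive_one_add {x : E →L[𝕜] E} (hx : ∀ v, 0 ≤ re ⟪x v, v⟫_𝕜) :
    (1 + x).IsUniformlyAccretive :=
  ⟨1, one_pos, fun v ↦ by
    rw [add_apply, one_apply_eq_self, inner_add_left, map_add, inner_self_eq_norm_sq]
    linarith [hx v]⟩

theorem IsUniformlyAccretive.exists_norm_one_sub_smul_lt_one {z : E →L[𝕜] E}
    (hz : z.IsUniformlyAccretive) : ∃ ε : ℝ, 0 < ε ∧ ‖1 - (ε : 𝕜) • z‖ < 1 := by
  obtain ⟨c, hc, hcz⟩ := hz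
  set N := ‖z‖
  -- `ε = c / (‖z‖² + 1)` makes `ε ‖z‖² ≤ c`, hence `‖(1 - ε z) v‖² ≤ (1 - ε c) ‖v‖²`.
  set ε := c / (N ^ 2 + 1)
  have hε : 0 < ε := by positivity
  have hεN : ε * N ^ 2 ≤ c := by
    rw [div_mul_eq_mul_div, div_le_iff₀ (by positivity)]
    nlinarith
  refine ⟨ε, hε, opNorm_lt_one_of_forall_sq_le (D := 1 - ε * c) (by nlinarith) fun v ↦ ?_⟩
  have hzv : ‖z v‖ ^ 2 ≤ N ^ 2 * ‖v‖ ^ 2 := by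
    rw [← mul_pow]
    exact pow_le_pow_left₀ (norm_nonneg _) (z.le_opNorm v) 2
  calc ‖(1 - (ε : 𝕜) • z) v‖ ^ 2 = ‖v‖ ^ 2 - 2 * (ε * re ⟪z v, v⟫_𝕜) + ε ^ 2 * ‖z v‖ ^ 2 := by
        rw [sub_apply, one_apply_eq_self, smul_apply, norm_sub_sq (𝕜 := 𝕜), inner_smul_right,
          inner_re_symm, re_ofReal_mul, norm_smul, norm_algebraMap', Real.norm_of_nonneg hε.le,
          mul_pow]
    _ ≤ ‖v‖ ^ 2 - 2 * (ε * (c * ‖v‖ ^ 2)) + ε * (ε * N ^ 2) * ‖v‖ ^ 2 := by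
        have := hcz v
        gcongr ?_ - 2 * (ε * ?_) + ?_
        nlinarith
    _ ≤ (1 - ε * c) * ‖v‖ ^ 2 := by
        have := mul_le_mul_of_nonneg_right (mul_le_mul_of_nonneg_left hεN hε.le) (sq_nonneg ‖v‖)
        linarith

variable [CompleteSpace E]

theorem re_inner_apply_self_nonneg_of_isPositive_add_adjoint {x : E →L[𝕜] E}
    (hx : (x + adjoint x).IsPositive) (v : E) : 0 ≤ re ⟪x v, v⟫_𝕜 := by
  have := hx.re_inner_nonneg_left v
  rw [add_apply, inner_add_left, map_add, adjoint_inner_left] at this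
  linarith [inner_re_symm (𝕜 := 𝕜) (x v) v]


theorem IsUniformlyAccretive.isUnit {z : E →L[𝕜] E} (hz : z.IsUniformlyAccretive) : IsUnit z :=
  have ⟨_, hε, h⟩ := hz.exists_norm_one_sub_smul_lt_one
  isUnit_of_norm_one_sub_smul_lt_one_s19 (RCLike.ofReal_ne_zero.mpr hε.ne') h

theorem IsUniformlyAccretive.inverse_mem_topologicalClosure_adjoin {z : E →L[𝕜] E}
    (hz : z.IsUniformlyAccretive) :
    Ring.inverse z ∈ (Algebra.adjoin 𝕜 {z}).topologicalClosure :=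
  have ⟨_, hε, h⟩ := hz.exists_norm_one_sub_smul_lt_one
  Subalgebra.inverse_mem_topologicalClosure_of_norm_one_sub_smul_lt_one
    (Algebra.self_mem_adjoin_singleton 𝕜 z) (RCLike.ofReal_ne_zero.mpr hε.ne') h

theorem IsUniformlyAccretive.inverse {z : E →L[𝕜] E} (hz : z.IsUniformlyAccretive) :
    (Ring.inverse z).IsUniformlyAccretive := by
  have hunit := hz.isUnit
  obtain ⟨c, hc, hcz⟩ := hz
  refine ⟨c / (‖z‖ ^ 2 + 1), by positivity, fun v ↦ ?_⟩
  set w := Ring.inverse z v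
  have hv : v = z w := by
    rw [← mul_apply_eq_comp, Ring.mul_inverse_cancel _ hunit, one_apply_eq_self]
  have hvw : ‖v‖ ^ 2 ≤ (‖z‖ ^ 2 + 1) * ‖w‖ ^ 2 := by
    calc ‖v‖ ^ 2 ≤ (‖z‖ * ‖w‖) ^ 2 := by rw [hv]; gcongr; exact z.le_opNorm w
      _ ≤ (‖z‖ ^ 2 + 1) * ‖w‖ ^ 2 := by nlinarith [sq_nonneg ‖w‖]
  calc c / (‖z‖ ^ 2 + 1) * ‖v‖ ^ 2 ≤ c * ‖w‖ ^ 2 := by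
        rw [div_mul_eq_mul_div, div_le_iff₀ (by positivity)]
        nlinarith
    _ ≤ re ⟪z w, w⟫_𝕜 := hcz w
    _ = re ⟪w, v⟫_𝕜 := by rw [hv, inner_re_symm]

end ContinuousLinearMap

/-- Theorem 3.2 (Blecher–Read): if `x ∈ B(H)` with `x + x* ≥ 0` and
`y = x(I + x)⁻¹`, then the closed (nonunital) subalgebra of `B(H)` generated by
`x` equals the one generated by `y`; in particular `x = y(I - y)⁻¹`, with
`(I - y)⁻¹` belonging to the closed unital algebra generated by `y`. -/
theorem stmt19 {H : Type*} [NormedAddCommGroup H] [InnerProductSpace ℂ H]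
    [CompleteSpace H] (x y : H →L[ℂ] H) (hx : (x + adjoint x).IsPositive)
    (hy : y = x * Ring.inverse (1 + x)) :
    (NonUnitalAlgebra.adjoin ℂ ({x} : Set (H →L[ℂ] H))).topologicalClosure =
      (NonUnitalAlgebra.adjoin ℂ ({y} : Set (H →L[ℂ] H))).topologicalClosure ∧
    x = y * Ring.inverse (1 - y) ∧
    Ring.inverse (1 - y) ∈
      (Algebra.adjoin ℂ ({y} : Set (H →L[ℂ] H))).topologicalClosure := by
  have hx' : (1 + x).IsUniformlyAccretive :=
    isUniformlyAccretive_one_add (re_inner_apply_self_nonneg_of_isPositive_add_adjoint hx)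
  have h1y : 1 - y = Ring.inverse (1 + x) := by
    rw [hy]
    nth_rewrite 1 [← Ring.mul_inverse_cancel _ hx'.isUnit]
    rw [← sub_mul, add_sub_cancel_right, one_mul]
  have hxy : x = y * Ring.inverse (1 - y) := by
    rw [h1y, Ring.inverse_inverse hx'.isUnit, hy, Ring.inverse_mul_cancel_right _ _ hx'.isUnit]
  have hy_mem : y ∈ (NonUnitalAlgebra.adjoin ℂ {x}).topologicalClosure := by
    have := hx'.inverse_mem_topologicalClosure_adjoin
    rw [Algebra.adjoin_singleton_one_add] at this
    exact hy ▸ Algebra.mul_mem_topologicalClosure_nonUnitalAdjoin_singleton this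
  have hinv_mem : Ring.inverse (1 - y) ∈ (Algebra.adjoin ℂ {y}).topologicalClosure := by
    have := (h1y ▸ hx'.inverse).inverse_mem_topologicalClosure_adjoin
    rwa [Algebra.adjoin_singleton_one_sub] at this
  have hx_mem : x ∈ (NonUnitalAlgebra.adjoin ℂ {y}).topologicalClosure :=
    hxy ▸ Algebra.mul_mem_topologicalClosure_nonUnitalAdjoin_singleton hinv_mem
  exact ⟨le_antisymm (NonUnitalAlgebra.topologicalClosure_adjoin_singleton_le hx_mem)
    (NonUnitalAlgebra.topologicalClosure_adjoin_singleton_le hy_mem), hxy, hinv_mem⟩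
end
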